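/- Let M be a loopless matroid on [n], and suppose [n] is partitioned as T_1 ⊔ ... ⊔ T_ℓ ⊔ S with each T_i nonempty, such that Σ_{i=1}^ℓ (2·rank_M(T_i) − 1) + |S| = rank(D(M,M)). Then every element of S is a coloop of D(M,M), and each T_i is a union of connected components of D(M,M). -/

import Mathlib

open Finset

/-- A matroid on the ground set `Fin n`, presented by its rank function. -/
structure FinMatroid (n : ℕ) where
  rank : Finset (Fin n) → ℕ
  rank_empty : rank ∅ = 0
  rank_le_card : ∀ S : Finset (Fin n), rank S ≤ S.card
  rank_mono : ∀ ⦃S T : Finset (Fin n)⦄, S ⊆ T → rank S ≤ rank T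
  rank_submod : ∀ S T : Finset (Fin n),
    rank (S ∪ T) + rank (S ∩ T) ≤ rank S + rank T

namespace FinMatroid

variable {n : ℕ}

/-- A set is independent if its rank equals its cardinality. -/
def Indep (M : FinMatroid n) (I : Finset (Fin n)) : Prop := M.rank I = I.card

/-- The rank of the matroid (rank of the full ground set). -/
def rk (M : FinMatroid n) : ℕ := M.rank Finset.univ

/-- A matroid is loopless if every singleton has positive rank. -/
def Loopless (M : FinMatroid n) : Prop := ∀ i : Fin n, 0 < M.rank {i}

/-- Two matroids on `[n]` have no common loops. -/
def NoCommonLoops (M₁ M₂ : FinMatroid n) : Prop :=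
  ∀ i : Fin n, 0 < M₁.rank {i} ∨ 0 < M₂.rank {i}

/-- A valid family for the Dilworth minimum: pairwise disjoint nonempty
subsets of `S`. -/
def ValidFamily (S : Finset (Fin n)) (𝒯 : Finset (Finset (Fin n))) : Prop :=
  (∀ T ∈ 𝒯, T ⊆ S ∧ T.Nonempty) ∧
    ∀ T ∈ 𝒯, ∀ T' ∈ 𝒯, T ≠ T' → Disjoint T T'

/-- The value `Σ_i (rank_{M₁}(T_i) + rank_{M₂}(T_i) − 1) + |S \ ∪ T_i|`
associated to a family. -/
def famValue (M₁ M₂ : FinMatroid n) (S : Finset (Fin n))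
    (𝒯 : Finset (Finset (Fin n))) : ℕ :=
  (∑ T ∈ 𝒯, (M₁.rank T + M₂.rank T - 1)) + (S \ 𝒯.sup id).card

/-- The rank function of the diagonal Dilworth truncation `D(M₁,M₂)`. -/
noncomputable def rankD (M₁ M₂ : FinMatroid n) (S : Finset (Fin n)) : ℕ :=
  sInf {v : ℕ | ∃ 𝒯 : Finset (Finset (Fin n)),
    ValidFamily S 𝒯 ∧ v = famValue M₁ M₂ S 𝒯}

/-- Independence in the diagonal Dilworth truncation. -/
def IndepD (M₁ M₂ : FinMatroid n) (I : Finset (Fin n)) : Prop :=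
  rankD M₁ M₂ I = I.card

/-- Circuits of the diagonal Dilworth truncation: minimal dependent sets. -/
def CircuitD (M₁ M₂ : FinMatroid n) (C : Finset (Fin n)) : Prop :=
  ¬ IndepD M₁ M₂ C ∧ ∀ C' : Finset (Fin n), C' ⊂ C → IndepD M₁ M₂ C'

end FinMatroid

/-!
The rank function of `D(M₁,M₂)` is submodular when `M₁` and `M₂` have no common loop. The block
value `g T = r₁ T + r₂ T - 1` is submodular on intersecting pairs, so for an optimal family of `X`
and a nonempty block `Q`, merging `Q` with the blocks that meet it bounds `rank_D (X ∪ Q)`, while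
cutting those blocks down to `Q` bounds `rank_D (X ∩ Q)`; uncrossing the blocks one by one gives
`rank_D (X ∪ Q) + rank_D (X ∩ Q) ≤ rank_D X + g Q`. Adding the blocks of an optimal partition of
`B` to `A` one at a time then yields `rank_D` submodularity.

Compare with the witness family `𝒯` of `rank_D [n]`: deleting an element covered by no block
lowers the witness value by one, hence lowers `rank_D`; splitting `𝒯` at a block `T` gives
`rank_D T + rank_D ([n] \ T) ≤ rank_D [n]`, which for a submodular function makes `T` a separator.
-/

section Submodular

variable {α : Type*} [DecidableEq α]

theorem union_sup_add_inter_sup_le_of_pairwiseDisjoint {f : Finset α → ℕ} (hf₀ : f ∅ = 0)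
    (hf : ∀ A B, Disjoint A B → f (A ∪ B) ≤ f A + f B) {c : Finset α → ℕ}
    {𝒬 : Finset (Finset α)} (h𝒬 : (𝒬 : Set (Finset α)).PairwiseDisjoint id)
    (hc : ∀ Q ∈ 𝒬, ∀ X, f (X ∪ Q) + f (X ∩ Q) ≤ f X + c Q) (A : Finset α) :
    f (A ∪ 𝒬.sup id) + f (A ∩ 𝒬.sup id) ≤ f A + ∑ Q ∈ 𝒬, c Q := by
  induction 𝒬 using Finset.induction_on with
  | empty => simp [hf₀]
  | insert Q 𝒮 hQ𝒮 ih =>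
    rw [coe_insert, Set.pairwiseDisjoint_insert] at h𝒬
    have hQU : Disjoint Q (𝒮.sup id) :=
      Finset.disjoint_sup_right.2 fun R hR => h𝒬.2 R hR fun h => hQ𝒮 (h ▸ hR)
    have ih := ih h𝒬.1 fun R hR => hc R (mem_insert_of_mem hR)
    have hstep := hc Q (mem_insert_self Q 𝒮) (A ∪ 𝒮.sup id)
    have hsplit := hf (A ∩ Q) (A ∩ 𝒮.sup id) (hQU.mono inter_subset_right inter_subset_right)
    rw [← inter_union_distrib_left] at hsplit
    rw [union_right_comm, union_inter_distrib_right, disjoint_iff_inter_eq_empty.1 hQU.symm,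
      union_empty] at hstep
    rw [sup_insert, sum_insert hQ𝒮, id, sup_eq_union, ← union_assoc]
    omega

theorem eq_inter_add_sdiff_of_submodular_of_add_compl_le [Fintype α] {f : Finset α → ℕ}
    (hf : ∀ A B, f (A ∪ B) + f (A ∩ B) ≤ f A + f B) {T : Finset α}
    (hT : f T + f (univ \ T) ≤ f univ) (A : Finset α) :
    f A = f (A ∩ T) + f (A \ T) := by
  have hsplit := hf (A \ T) (A ∩ T)
  have hA := hf A T
  have hcompl := hf (A ∪ T) (univ \ T)
  rw [sdiff_union_inter] at hsplit
  rw [show A ∪ T ∪ univ \ T = univ by ext; simp,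
    show (A ∪ T) ∩ (univ \ T) = A \ T by ext; simp; tauto] at hcompl
  omega

end Submodular

namespace FinMatroid

variable {n : ℕ} {M₁ M₂ : FinMatroid n}

def blockRank (M₁ M₂ : FinMatroid n) (T : Finset (Fin n)) : ℕ := M₁.rank T + M₂.rank T - 1

theorem famValue_eq (S : Finset (Fin n)) (𝒯 : Finset (Finset (Fin n))) :
    famValue M₁ M₂ S 𝒯 = ∑ T ∈ 𝒯, blockRank M₁ M₂ T + #(S \ 𝒯.sup id) := rfl

theorem Loopless.noCommonLoops {M : FinMatroid n} (hM : M.Loopless) : NoCommonLoops M M :=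
  fun i => Or.inl (hM i)

theorem NoCommonLoops.rank_add_rank_pos (h : NoCommonLoops M₁ M₂) {S : Finset (Fin n)}
    (hS : S.Nonempty) : 0 < M₁.rank S + M₂.rank S := by
  obtain ⟨x, hx⟩ := hS
  have h₁ := M₁.rank_mono (singleton_subset_iff.2 hx)
  have h₂ := M₂.rank_mono (singleton_subset_iff.2 hx)
  rcases h x with h | h <;> omega

theorem blockRank_mono {S T : Finset (Fin n)} (hST : S ⊆ T) :
    blockRank M₁ M₂ S ≤ blockRank M₁ M₂ T := by
  have h₁ := M₁.rank_mono hST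
  have h₂ := M₂.rank_mono hST
  unfold blockRank
  omega

theorem blockRank_singleton_le_one (x : Fin n) : blockRank M₁ M₂ {x} ≤ 1 := by
  have h₁ := M₁.rank_le_card {x}
  have h₂ := M₂.rank_le_card {x}
  rw [card_singleton] at h₁ h₂
  unfold blockRank
  omega

theorem blockRank_union_add_inter_le (h : NoCommonLoops M₁ M₂) {S T : Finset (Fin n)}
    (hST : (S ∩ T).Nonempty) :
    blockRank M₁ M₂ (S ∪ T) + blockRank M₁ M₂ (S ∩ T) ≤ blockRank M₁ M₂ S + blockRank M₁ M₂ T := by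
  have hS := h.rank_add_rank_pos (hST.mono inter_subset_left)
  have hT := h.rank_add_rank_pos (hST.mono inter_subset_right)
  have hSuT := h.rank_add_rank_pos (S := S ∪ T)
    (hST.mono (inter_subset_left.trans subset_union_left))
  have hST := h.rank_add_rank_pos hST
  have h₁ := M₁.rank_submod S T
  have h₂ := M₂.rank_submod S T
  unfold blockRank
  omega

theorem blockRank_union_sup_add_sum_inter_le (h : NoCommonLoops M₁ M₂) (Q : Finset (Fin n))
    {𝒞 : Finset (Finset (Fin n))} (h𝒞 : ∀ R ∈ 𝒞, ¬Disjoint R Q) :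
    blockRank M₁ M₂ (Q ∪ 𝒞.sup id) + ∑ R ∈ 𝒞, blockRank M₁ M₂ (R ∩ Q)
      ≤ blockRank M₁ M₂ Q + ∑ R ∈ 𝒞, blockRank M₁ M₂ R := by
  induction 𝒞 using Finset.induction_on with
  | empty => simp
  | insert R 𝒮 hR𝒮 ih =>
    have ih := ih fun R' hR' => h𝒞 R' (mem_insert_of_mem hR')
    have hRQ : R ∩ Q ⊆ (Q ∪ 𝒮.sup id) ∩ R := fun x hx => by
      simp only [mem_inter, mem_union] at hx ⊢
      tauto
    have hmerge := blockRank_union_add_inter_le h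
      ((not_disjoint_iff_nonempty_inter.1 (h𝒞 R (mem_insert_self R 𝒮))).mono hRQ)
    have hmono := blockRank_mono (M₁ := M₁) (M₂ := M₂) hRQ
    rw [sup_insert, sum_insert hR𝒮, sum_insert hR𝒮, id, sup_eq_union, ← union_assoc,
      union_right_comm]
    omega

section ValidFamily

variable {S S' A B : Finset (Fin n)} {𝒯 𝒜 ℬ : Finset (Finset (Fin n))}

theorem validFamily_empty (S : Finset (Fin n)) : ValidFamily S ∅ := ⟨by simp, by simp⟩

theorem validFamily_singleton {T : Finset (Fin n)} (hT : T.Nonempty) : ValidFamily T {T} :=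
  ⟨fun _ h => (mem_singleton.1 h).symm ▸ ⟨subset_rfl, hT⟩,
    fun _ h _ h' hne => absurd ((mem_singleton.1 h).trans (mem_singleton.1 h').symm) hne⟩

theorem validFamily_image_singleton (F : Finset (Fin n)) : ValidFamily F (F.image singleton) := by
  refine ⟨fun T hT => ?_, fun T hT T' hT' hne => ?_⟩
  · obtain ⟨x, hx, rfl⟩ := mem_image.1 hT
    exact ⟨singleton_subset_iff.2 hx, singleton_nonempty x⟩
  · obtain ⟨x, -, rfl⟩ := mem_image.1 hT
    obtain ⟨y, -, rfl⟩ := mem_image.1 hT'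
    exact disjoint_singleton.2 fun hxy => hne (hxy ▸ rfl)

theorem ValidFamily.pairwiseDisjoint (h : ValidFamily S 𝒯) :
    (𝒯 : Set (Finset (Fin n))).PairwiseDisjoint id :=
  h.2

theorem ValidFamily.sup_subset (h : ValidFamily S 𝒯) : 𝒯.sup id ⊆ S :=
  Finset.sup_le fun T hT => (h.1 T hT).1

theorem ValidFamily.of_sup_subset (h : ValidFamily S 𝒯) (hS : 𝒯.sup id ⊆ S') :
    ValidFamily S' 𝒯 :=
  ⟨fun T hT => ⟨(le_sup (f := id) hT).trans hS, (h.1 T hT).2⟩, h.2⟩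

theorem ValidFamily.union (h𝒜 : ValidFamily A 𝒜) (hℬ : ValidFamily B ℬ) (hAB : Disjoint A B) :
    ValidFamily (A ∪ B) (𝒜 ∪ ℬ) := by
  refine ⟨fun T hT => ?_, ?_⟩
  · rcases mem_union.1 hT with hT | hT
    · exact ⟨(h𝒜.1 T hT).1.trans subset_union_left, (h𝒜.1 T hT).2⟩
    · exact ⟨(hℬ.1 T hT).1.trans subset_union_right, (hℬ.1 T hT).2⟩
  · show ((𝒜 ∪ ℬ : Finset _) : Set (Finset (Fin n))).PairwiseDisjoint id
    rw [coe_union, Set.pairwiseDisjoint_union]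
    exact ⟨h𝒜.pairwiseDisjoint, hℬ.pairwiseDisjoint, fun T hT T' hT' _ => hAB.mono (h𝒜.1 T hT).1 (hℬ.1 T' hT').1⟩

end ValidFamily

section RankD

variable {S A B : Finset (Fin n)} {𝒯 : Finset (Finset (Fin n))}

theorem rankD_le_famValue (h : ValidFamily S 𝒯) : rankD M₁ M₂ S ≤ famValue M₁ M₂ S 𝒯 :=
  Nat.sInf_le ⟨𝒯, h, rfl⟩

theorem rankD_le_of_sdiff_subset {F : Finset (Fin n)} (h : ValidFamily S 𝒯)
    (hF : S \ 𝒯.sup id ⊆ F) : rankD M₁ M₂ S ≤ ∑ T ∈ 𝒯, blockRank M₁ M₂ T + #F :=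
  (rankD_le_famValue h).trans (add_le_add_right (card_le_card hF) _)

theorem exists_famValue_eq_rankD (M₁ M₂ : FinMatroid n) (S : Finset (Fin n)) :
    ∃ 𝒯, ValidFamily S 𝒯 ∧ famValue M₁ M₂ S 𝒯 = rankD M₁ M₂ S := by
  obtain ⟨𝒯, h, h'⟩ := Nat.sInf_mem (s := {v | ∃ 𝒯, ValidFamily S 𝒯 ∧ v = famValue M₁ M₂ S 𝒯})
    ⟨_, ∅, validFamily_empty S, rfl⟩
  exact ⟨𝒯, h, h'.symm⟩

theorem rankD_empty : rankD M₁ M₂ ∅ = 0 :=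
  Nat.le_zero.1 <| (rankD_le_famValue (validFamily_empty ∅)).trans (by simp [famValue])

theorem rankD_le_blockRank {T : Finset (Fin n)} (hT : T.Nonempty) :
    rankD M₁ M₂ T ≤ blockRank M₁ M₂ T := by
  simpa using rankD_le_of_sdiff_subset (M₁ := M₁) (M₂ := M₂) (F := ∅) (validFamily_singleton hT)
    (by simp)

theorem rankD_union_le (hAB : Disjoint A B) :
    rankD M₁ M₂ (A ∪ B) ≤ rankD M₁ M₂ A + rankD M₁ M₂ B := by
  obtain ⟨𝒜, h𝒜, hA⟩ := exists_famValue_eq_rankD M₁ M₂ A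
  obtain ⟨ℬ, hℬ, hB⟩ := exists_famValue_eq_rankD M₁ M₂ B
  have hle := rankD_le_of_sdiff_subset (M₁ := M₁) (M₂ := M₂) (h𝒜.union hℬ hAB)
    (F := (A \ 𝒜.sup id) ∪ (B \ ℬ.sup id)) (by
      intro x
      simp only [sup_union, sup_eq_union, mem_sdiff, mem_union]
      tauto)
  have hsum := sum_union_inter (s₁ := 𝒜) (s₂ := ℬ) (f := blockRank M₁ M₂)
  have hcard := card_union_le (A \ 𝒜.sup id) (B \ ℬ.sup id)
  rw [famValue_eq] at hA hB
  omega

end RankD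

section Uncrossing

variable {X Q : Finset (Fin n)} {𝒯 : Finset (Finset (Fin n))}

theorem rankD_union_le_of_validFamily (hv : ValidFamily X 𝒯) (hQ : Q.Nonempty) :
    rankD M₁ M₂ (X ∪ Q) ≤ blockRank M₁ M₂ (Q ∪ {R ∈ 𝒯 | ¬Disjoint R Q}.sup id)
      + ∑ R ∈ 𝒯 with Disjoint R Q, blockRank M₁ M₂ R + #((X \ 𝒯.sup id) \ Q) := by
  set C := Q ∪ {R ∈ 𝒯 | ¬Disjoint R Q}.sup id
  set 𝒟 := {R ∈ 𝒯 | Disjoint R Q}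
  have hC𝒟 : ∀ D ∈ 𝒟, Disjoint C D := by
    intro D hD
    obtain ⟨hD𝒯, hDQ⟩ := mem_filter.1 hD
    refine disjoint_union_left.2 ⟨hDQ.symm, Finset.disjoint_sup_left.2 fun R hR => ?_⟩
    obtain ⟨hR𝒯, hRQ⟩ := mem_filter.1 hR
    exact hv.2 R hR𝒯 D hD𝒯 fun h => hRQ (h ▸ hDQ)
  have hC : C ∉ 𝒟 := fun h => (hQ.mono subset_union_left).ne_empty (disjoint_self.1 (hC𝒟 C h))
  have hvalid : ValidFamily (X ∪ Q) (insert C 𝒟) := by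
    refine ⟨fun T hT => ?_, ?_⟩
    · rcases mem_insert.1 hT with rfl | hT
      · exact ⟨union_subset subset_union_right
          ((sup_mono (filter_subset _ 𝒯)).trans (hv.sup_subset.trans subset_union_left)),
          hQ.mono subset_union_left⟩
      · have := hv.1 T (mem_filter.1 hT).1
        exact ⟨this.1.trans subset_union_left, this.2⟩
    · show ((insert C 𝒟 : Finset _) : Set (Finset (Fin n))).PairwiseDisjoint id
      rw [coe_insert]
      exact (hv.pairwiseDisjoint.subset (coe_subset.2 (filter_subset _ 𝒯))).insert
        fun D hD _ => hC𝒟 D hD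
  have hfree : (X ∪ Q) \ (insert C 𝒟).sup id ⊆ (X \ 𝒯.sup id) \ Q := by
    intro x hx
    simp only [mem_sdiff, mem_union, sup_insert, id, sup_eq_union, not_or, C] at hx
    obtain ⟨hxXQ, ⟨hxQ, hx𝒞⟩, hx𝒟⟩ := hx
    refine mem_sdiff.2 ⟨mem_sdiff.2 ⟨hxXQ.resolve_right hxQ, fun hx𝒯 => ?_⟩, hxQ⟩
    obtain ⟨R, hR, hxR⟩ := mem_sup.1 hx𝒯
    by_cases hRQ : Disjoint R Q
    · exact hx𝒟 (mem_sup.2 ⟨R, mem_filter.2 ⟨hR, hRQ⟩, hxR⟩)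
    · exact hx𝒞 (mem_sup.2 ⟨R, mem_filter.2 ⟨hR, hRQ⟩, hxR⟩)
  calc rankD M₁ M₂ (X ∪ Q)
      ≤ ∑ R ∈ insert C 𝒟, blockRank M₁ M₂ R + #((X \ 𝒯.sup id) \ Q) :=
        rankD_le_of_sdiff_subset hvalid hfree
    _ = _ := by rw [sum_insert hC]

theorem rankD_inter_le_of_validFamily (hv : ValidFamily X 𝒯) (Q : Finset (Fin n)) :
    rankD M₁ M₂ (X ∩ Q) ≤ ∑ R ∈ 𝒯 with ¬Disjoint R Q, blockRank M₁ M₂ (R ∩ Q)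
      + #((X \ 𝒯.sup id) ∩ Q) := by
  set 𝒞 := {R ∈ 𝒯 | ¬Disjoint R Q}
  have hvalid : ValidFamily (X ∩ Q) (𝒞.image (· ∩ Q)) := by
    refine ⟨fun T hT => ?_, ?_⟩
    · obtain ⟨R, hR, rfl⟩ := mem_image.1 hT
      obtain ⟨hR𝒯, hRQ⟩ := mem_filter.1 hR
      exact ⟨inter_subset_inter_right (hv.1 R hR𝒯).1, not_disjoint_iff_nonempty_inter.1 hRQ⟩
    · have h𝒞 : (𝒞 : Set (Finset (Fin n))) ⊆ 𝒯 := coe_subset.2 (filter_subset _ _)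
      have hdisj := (hv.pairwiseDisjoint.subset h𝒞).image_of_le
        (g := (· ∩ Q)) fun _ => inter_subset_left
      rwa [← coe_image] at hdisj
  have hfree : (X ∩ Q) \ (𝒞.image (· ∩ Q)).sup id ⊆ (X \ 𝒯.sup id) ∩ Q := by
    intro x hx
    simp only [mem_sdiff, mem_inter] at hx ⊢
    obtain ⟨⟨hxX, hxQ⟩, hx𝒞⟩ := hx
    refine ⟨⟨hxX, fun hx𝒯 => hx𝒞 ?_⟩, hxQ⟩
    obtain ⟨R, hR, hxR⟩ := mem_sup.1 hx𝒯
    have hxRQ : x ∈ R ∩ Q := mem_inter.2 ⟨hxR, hxQ⟩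
    exact mem_sup.2 ⟨R ∩ Q, mem_image_of_mem _
      (mem_filter.2 ⟨hR, not_disjoint_iff_nonempty_inter.2 ⟨x, hxRQ⟩⟩), hxRQ⟩
  calc rankD M₁ M₂ (X ∩ Q)
      ≤ ∑ T ∈ 𝒞.image (· ∩ Q), blockRank M₁ M₂ T + #((X \ 𝒯.sup id) ∩ Q) :=
        rankD_le_of_sdiff_subset hvalid hfree
    _ ≤ _ := add_le_add_left (sum_image_le_of_nonneg fun _ _ => Nat.zero_le _) _

theorem rankD_union_add_rankD_inter_le (h : NoCommonLoops M₁ M₂) (X : Finset (Fin n))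
    (hQ : Q.Nonempty) :
    rankD M₁ M₂ (X ∪ Q) + rankD M₁ M₂ (X ∩ Q) ≤ rankD M₁ M₂ X + blockRank M₁ M₂ Q := by
  obtain ⟨𝒯, hv, hX⟩ := exists_famValue_eq_rankD M₁ M₂ X
  have hunion := rankD_union_le_of_validFamily (M₁ := M₁) (M₂ := M₂) hv hQ
  have hinter := rankD_inter_le_of_validFamily (M₁ := M₁) (M₂ := M₂) hv Q
  have huncross := blockRank_union_sup_add_sum_inter_le h Q (𝒞 := {R ∈ 𝒯 | ¬Disjoint R Q})
    fun R hR => (mem_filter.1 hR).2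
  have hsum := sum_filter_add_sum_filter_not 𝒯 (Disjoint · Q) (blockRank M₁ M₂)
  have hcard := card_sdiff_add_card_inter (X \ 𝒯.sup id) Q
  rw [famValue_eq] at hX
  omega

end Uncrossing

theorem exists_partition_sum_blockRank_le_rankD (M₁ M₂ : FinMatroid n) (B : Finset (Fin n)) :
    ∃ 𝒬, ValidFamily B 𝒬 ∧ 𝒬.sup id = B ∧ ∑ Q ∈ 𝒬, blockRank M₁ M₂ Q ≤ rankD M₁ M₂ B := by
  obtain ⟨𝒯, hv, hB⟩ := exists_famValue_eq_rankD M₁ M₂ B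
  set F := B \ 𝒯.sup id
  have hcover : 𝒯.sup id ∪ F = B := union_sdiff_of_subset hv.sup_subset
  refine ⟨𝒯 ∪ F.image singleton, ?_, ?_, ?_⟩
  · rw [← hcover]
    exact (hv.of_sup_subset subset_rfl).union (validFamily_image_singleton F) disjoint_sdiff
  · rw [sup_union, sup_image, Function.id_comp, sup_singleton_eq_self]
    exact hcover
  · rw [← hB, famValue_eq]
    calc ∑ Q ∈ 𝒯 ∪ F.image singleton, blockRank M₁ M₂ Q
        ≤ ∑ Q ∈ 𝒯, blockRank M₁ M₂ Q + ∑ Q ∈ F.image singleton, blockRank M₁ M₂ Q :=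
          (Nat.le_add_right _ _).trans_eq sum_union_inter
      _ ≤ ∑ Q ∈ 𝒯, blockRank M₁ M₂ Q + ∑ x ∈ F, blockRank M₁ M₂ {x} :=
          add_le_add_right (sum_image_le_of_nonneg fun _ _ => Nat.zero_le _) _
      _ ≤ ∑ Q ∈ 𝒯, blockRank M₁ M₂ Q + #F := by
          gcongr
          simpa using sum_le_card_nsmul F _ 1 fun x _ => blockRank_singleton_le_one x

theorem rankD_submod (h : NoCommonLoops M₁ M₂) (A B : Finset (Fin n)) :
    rankD M₁ M₂ (A ∪ B) + rankD M₁ M₂ (A ∩ B) ≤ rankD M₁ M₂ A + rankD M₁ M₂ B := by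
  obtain ⟨𝒬, hv, hcover, hsum⟩ := exists_partition_sum_blockRank_le_rankD M₁ M₂ B
  have h𝒬 := union_sup_add_inter_sup_le_of_pairwiseDisjoint rankD_empty
    (fun _ _ => rankD_union_le) hv.pairwiseDisjoint
    (fun Q hQ X => rankD_union_add_rankD_inter_le h X (hv.1 Q hQ).2) A
  rw [hcover] at h𝒬
  omega

section Witness

variable {S T : Finset (Fin n)} {𝒯 : Finset (Finset (Fin n))}

theorem rankD_erase_lt_famValue (hv : ValidFamily S 𝒯) {i : Fin n} (hi : i ∈ S \ 𝒯.sup id) :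
    rankD M₁ M₂ (S.erase i) < famValue M₁ M₂ S 𝒯 := by
  have hvalid : ValidFamily (S.erase i) 𝒯 := hv.of_sup_subset fun x hx =>
    mem_erase.2 ⟨fun hxi => (mem_sdiff.1 hi).2 (hxi ▸ hx), hv.sup_subset hx⟩
  have hfree : S.erase i \ 𝒯.sup id ⊆ (S \ 𝒯.sup id).erase i := by
    intro x
    simp only [mem_sdiff, mem_erase]
    tauto
  have hle := rankD_le_of_sdiff_subset (M₁ := M₁) (M₂ := M₂) hvalid hfree
  have hcard := card_erase_lt_of_mem hi
  rw [famValue_eq]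
  omega

theorem rankD_add_rankD_sdiff_le_famValue (hv : ValidFamily S 𝒯) (hT : T ∈ 𝒯) :
    rankD M₁ M₂ T + rankD M₁ M₂ (S \ T) ≤ famValue M₁ M₂ S 𝒯 := by
  have hvalid : ValidFamily (S \ T) (𝒯.erase T) := by
    refine ⟨fun T' hT' => ?_, fun _ h _ h' => hv.2 _ (mem_of_mem_erase h) _ (mem_of_mem_erase h')⟩
    obtain ⟨hT'T, hT'⟩ := mem_erase.1 hT'
    exact ⟨subset_sdiff.2 ⟨(hv.1 T' hT').1, hv.2 T' hT' T hT hT'T⟩, (hv.1 T' hT').2⟩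
  have hfree : (S \ T) \ (𝒯.erase T).sup id ⊆ S \ 𝒯.sup id := by
    intro x hx
    simp only [mem_sdiff] at hx ⊢
    refine ⟨hx.1.1, fun hx𝒯 => ?_⟩
    obtain ⟨R, hR, hxR⟩ := mem_sup.1 hx𝒯
    exact hx.2 (mem_sup.2 ⟨R, mem_erase.2 ⟨fun hRT => hx.1.2 (hRT ▸ hxR), hR⟩, hxR⟩)
  have hrest := rankD_le_of_sdiff_subset (M₁ := M₁) (M₂ := M₂) hvalid hfree
  have hblock := rankD_le_blockRank (M₁ := M₁) (M₂ := M₂) (hv.1 T hT).2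
  have hsum := sum_erase_add 𝒯 (blockRank M₁ M₂) hT
  rw [famValue_eq]
  omega

end Witness

end FinMatroid

open FinMatroid in
/-- If `[n] = T₁ ⊔ ... ⊔ T_ℓ ⊔ S` witnesses the rank of `D(M,M)`, i.e.
`Σ_i (2·rank_M(T_i) − 1) + |S| = rank(D(M,M))`, then every element of `S` is a
coloop of `D(M,M)` and every `T_i` is a union of connected components of
`D(M,M)` (that is, a separator). -/
theorem rankD_witness_structure (n : ℕ) (M : FinMatroid n) (hM : M.Loopless)
    (𝒯 : Finset (Finset (Fin n)))
    (hval : ValidFamily Finset.univ 𝒯)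
    (heq : famValue M M Finset.univ 𝒯 = rankD M M Finset.univ) :
    (∀ i ∈ Finset.univ \ 𝒯.sup id,
        rankD M M (Finset.univ.erase i) < rankD M M Finset.univ) ∧
    (∀ T ∈ 𝒯, ∀ A : Finset (Fin n),
        rankD M M A = rankD M M (A ∩ T) + rankD M M (A \ T)) := by
  refine ⟨fun i hi => heq ▸ rankD_erase_lt_famValue hval hi, fun T hT => ?_⟩
  exact eq_inter_add_sdiff_of_submodular_of_add_compl_le (rankD_submod hM.noCommonLoops)
    (heq ▸ rankD_add_rankD_sdiff_le_famValue hval hT)
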